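/- Let 2 ≤ p < ∞, 0 < q < ∞, 0 < s < 1, and r + 1 - 2/p < ρ ≤ 1. If σ : ℤ → ℂ satisfies |σ(ξ)| ≤ C|ξ|^{-ρ} for ξ ≠ 0 and |σ(0)| ≤ C, then there is a constant C' such that for every 2π-periodic Hölder continuous f of order s with (∑_ξ |f̂(ξ)|^p)^{1/p} < ∞: (∑_{m=0}^{∞} 2^{mrq} ‖∑_{2^m ≤ |ξ| < 2^{m+1}} σ(ξ)f̂(ξ)e^{ix ξ}‖_{L^p(𝕋)}^q)^{1/q} ≤ C' ‖f‖_{Λ^s}. -/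

import Mathlib

noncomputable def fourierCoef (f : ℝ → ℂ) (ξ : ℤ) : ℂ :=
  (1 / (2 * Real.pi)) * ∫ x in (0:ℝ)..(2 * Real.pi), f x * Complex.exp (-(Complex.I * (ξ:ℂ) * (x:ℂ)))

noncomputable def dyadicBlock (m : ℕ) : Finset ℤ :=
  (Finset.Icc (-(2^(m+1) : ℤ)) (2^(m+1))).filter fun ξ => 2^m ≤ |ξ| ∧ |ξ| < 2^(m+1)

/-!
Let `h = π / 2^(m+1)`. The Fourier coefficients of `f (· - h) - f` are those of `f` multiplied
by `e^{-iξh} - 1`, which has modulus at least `1` on the `m`-th dyadic block. Since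
`‖f (· - h) - f‖_∞ ≤ B h^s`, Bessel's inequality gives `‖f̂‖_{ℓ²(block)} ≲ B 2^(-ms)`, and the
symbol contributes a factor `2^(-mρ)`. A trigonometric polynomial `g` with `n` frequencies
satisfies `‖g‖_p^p ≤ ‖g‖_∞^(p-2) ‖g‖_2^2`, where `‖g‖_∞ ≤ √n ‖ĝ‖_{ℓ²}` by Cauchy–Schwarz and
`‖g‖_2 = √(2π) ‖ĝ‖_{ℓ²}` by Parseval; hence `‖g‖_p ≤ (2π)^(1/p) n^(1/2 - 1/p) ‖ĝ‖_{ℓ²}`. The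
`m`-th block therefore has `L^p` norm `≲ B 2^(m(1/2 - 1/p - ρ - s))`, and since
`r + 1 - 2/p < ρ`, `p ≥ 2` and `s > 0`, the weighted `ℓ^q` sum is a convergent geometric series.
-/

open MeasureTheory Real

lemma fourierCoef_eq_fourierCoeffOn (f : ℝ → ℂ) (ξ : ℤ) :
    fourierCoef f ξ = fourierCoeffOn two_pi_pos f ξ := by
  rw [fourierCoeffOn_eq_integral, fourierCoef, Complex.real_smul, sub_zero]
  push_cast
  congr 1
  refine intervalIntegral.integral_congr fun x _ => ?_
  rw [fourier_coe_apply, smul_eq_mul, mul_comm]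
  congr 2
  field_simp
  push_cast
  ring

lemma sum_sq_norm_fourierCoef_le {g : ℝ → ℂ} (hg : MemLp g 2 (volume.restrict (Set.Ioc 0 (2 * π))))
    (S : Finset ℤ) :
    ∑ ξ ∈ S, ‖fourierCoef g ξ‖ ^ 2 ≤ (2 * π)⁻¹ * ∫ x in (0:ℝ)..2 * π, ‖g x‖ ^ 2 := by
  have h := hasSum_sq_fourierCoeffOn two_pi_pos hg
  simp only [← fourierCoef_eq_fourierCoeffOn, sub_zero, smul_eq_mul] at h
  exact sum_le_hasSum S (fun _ _ => by positivity) h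

lemma sqrt_sum_sq_norm_fourierCoef_le_of_norm_le {g : ℝ → ℂ} (hg : Continuous g) {β : ℝ}
    (hβ : ∀ x, ‖g x‖ ≤ β) (S : Finset ℤ) :
    √(∑ ξ ∈ S, ‖fourierCoef g ξ‖ ^ 2) ≤ β := by
  have hβ0 : 0 ≤ β := (norm_nonneg _).trans (hβ 0)
  have hint : ∫ x in (0:ℝ)..2 * π, ‖g x‖ ^ 2 ≤ 2 * π * β ^ 2 := by
    have := intervalIntegral.integral_mono_on two_pi_pos.le
      ((hg.norm.pow 2).intervalIntegrable _ _) (intervalIntegrable_const (μ := volume))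
      fun x _ => pow_le_pow_left₀ (norm_nonneg _) (hβ x) 2
    simpa using this
  have hbessel := sum_sq_norm_fourierCoef_le
    (MemLp.of_bound hg.aestronglyMeasurable β (ae_of_all _ hβ)) S
  rw [Real.sqrt_le_left hβ0]
  calc _ ≤ (2 * π)⁻¹ * ∫ x in (0:ℝ)..2 * π, ‖g x‖ ^ 2 := hbessel
    _ ≤ (2 * π)⁻¹ * (2 * π * β ^ 2) := by gcongr
    _ = β ^ 2 := by field_simp

lemma integral_exp_I_mul_int (k : ℤ) :
    ∫ x in (0:ℝ)..2 * π, Complex.exp (Complex.I * k * x) = if k = 0 then (2 * π : ℂ) else 0 := by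
  split_ifs with hk
  · simp [hk]
  have hc : Complex.I * k ≠ 0 := mul_ne_zero Complex.I_ne_zero (by exact_mod_cast hk)
  rw [integral_exp_mul_complex hc, div_eq_zero_iff, sub_eq_zero]
  left
  rw [show Complex.I * k * ((2 * π : ℝ) : ℂ) = k * (2 * π * Complex.I) by push_cast; ring,
    Complex.exp_int_mul_two_pi_mul_I]
  simp

noncomputable def trigPoly (S : Finset ℤ) (c : ℤ → ℂ) (x : ℝ) : ℂ :=
  ∑ ξ ∈ S, c ξ * Complex.exp (Complex.I * x * ξ)

lemma continuous_trigPoly (S : Finset ℤ) (c : ℤ → ℂ) : Continuous (trigPoly S c) := by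
  unfold trigPoly
  fun_prop

lemma norm_trigPoly_le (S : Finset ℤ) (c : ℤ → ℂ) (x : ℝ) :
    ‖trigPoly S c x‖ ≤ ∑ ξ ∈ S, ‖c ξ‖ := by
  refine (norm_sum_le _ _).trans_eq (Finset.sum_congr rfl fun ξ _ => ?_)
  rw [norm_mul, show Complex.I * x * ξ = ((x * ξ : ℝ) : ℂ) * Complex.I by push_cast; ring,
    Complex.norm_exp_ofReal_mul_I, mul_one]

lemma fourierCoef_trigPoly (S : Finset ℤ) (c : ℤ → ℂ) (ξ : ℤ) :
    fourierCoef (trigPoly S c) ξ = if ξ ∈ S then c ξ else 0 := by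
  have hterm : ∀ η x, c η * Complex.exp (Complex.I * x * η) * Complex.exp (-(Complex.I * ξ * x))
      = c η * Complex.exp (Complex.I * ((η - ξ : ℤ) : ℂ) * x) := fun η x => by
    rw [mul_assoc, ← Complex.exp_add]
    push_cast
    ring_nf
  simp only [fourierCoef, trigPoly, Finset.sum_mul, hterm]
  rw [intervalIntegral.integral_finsetSum fun η _ =>
    (by fun_prop : Continuous _).intervalIntegrable _ _]
  simp only [intervalIntegral.integral_const_mul, integral_exp_I_mul_int, sub_eq_zero, mul_ite,
    mul_zero, Finset.sum_ite_eq']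
  split_ifs
  · field_simp
  · simp

lemma integral_sq_norm_trigPoly (S : Finset ℤ) (c : ℤ → ℂ) :
    ∫ x in (0:ℝ)..2 * π, ‖trigPoly S c x‖ ^ 2 = 2 * π * ∑ ξ ∈ S, ‖c ξ‖ ^ 2 := by
  have hparseval := hasSum_sq_fourierCoeffOn two_pi_pos
    (MemLp.of_bound (continuous_trigPoly S c).aestronglyMeasurable _
      (ae_of_all _ (norm_trigPoly_le S c)))
  simp only [← fourierCoef_eq_fourierCoeffOn, fourierCoef_trigPoly, sub_zero, smul_eq_mul]
    at hparseval
  have hfinite : HasSum (fun ξ => ‖if ξ ∈ S then c ξ else 0‖ ^ 2) (∑ ξ ∈ S, ‖c ξ‖ ^ 2) := by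
    convert hasSum_sum_of_ne_finset_zero (L := SummationFilter.unconditional ℤ) (s := S)
      (f := fun ξ => ‖if ξ ∈ S then c ξ else 0‖ ^ 2) fun ξ hξ => by simp [hξ] using 1
    exact Finset.sum_congr rfl fun ξ hξ => by simp [hξ]
  rw [← hparseval.unique hfinite]
  field_simp

lemma fourierCoef_sub {f g : ℝ → ℂ} (hf : Continuous f) (hg : Continuous g) (ξ : ℤ) :
    fourierCoef (fun x => f x - g x) ξ = fourierCoef f ξ - fourierCoef g ξ := by
  simp only [fourierCoef, sub_mul]
  rw [intervalIntegral.integral_sub ((by fun_prop : Continuous _).intervalIntegrable _ _)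
    ((by fun_prop : Continuous _).intervalIntegrable _ _), mul_sub]

lemma fourierCoef_comp_sub {f : ℝ → ℂ} (hf : Function.Periodic f (2 * π)) (h : ℝ) (ξ : ℤ) :
    fourierCoef (fun x => f (x - h)) ξ = Complex.exp (-(Complex.I * ξ * h)) * fourierCoef f ξ := by
  set F : ℝ → ℂ := fun u => f u * Complex.exp (-(Complex.I * ξ * u))
  have hF : Function.Periodic F (2 * π) := fun u => by
    simp only [F, hf u]
    rw [show -(Complex.I * ξ * ((u + 2 * π : ℝ) : ℂ))
        = -(Complex.I * ξ * u) + (-ξ : ℤ) * (2 * π * Complex.I) by push_cast; ring, Complex.exp_add, Complex.exp_int_mul_two_pi_mul_I, mul_one]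
  have hshift : ∀ x : ℝ, f (x - h) * Complex.exp (-(Complex.I * ξ * x))
      = Complex.exp (-(Complex.I * ξ * h)) * F (x - h) := fun x => by
    simp only [F]
    rw [mul_left_comm, ← Complex.exp_add]
    push_cast
    ring_nf
  have hperiod : ∫ x in (0:ℝ)..2 * π, F (x - h) = ∫ x in (0:ℝ)..2 * π, F x := by
    rw [intervalIntegral.integral_comp_sub_right, zero_sub, sub_eq_neg_add]
    simpa using hF.intervalIntegral_add_eq (-h) 0
  simp only [fourierCoef, hshift, intervalIntegral.integral_const_mul, hperiod]
  ring

lemma one_le_norm_exp_I_mul_sub_one {θ : ℝ} (h1 : π / 2 ≤ |θ|) (h2 : |θ| ≤ π) :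
    1 ≤ ‖Complex.exp (Complex.I * θ) - 1‖ := by
  have hhalf : |θ / 2| ≤ π := by rw [abs_div, abs_two]; linarith [pi_pos]
  rw [Complex.norm_exp_I_mul_ofReal_sub_one, norm_mul, Real.norm_eq_abs, Real.norm_eq_abs,
    abs_sin_eq_sin_abs_of_abs_le_pi hhalf, abs_two, abs_div, abs_two]
  have : sin (π / 6) ≤ sin (|θ| / 2) :=
    sin_le_sin_of_le_of_le_pi_div_two (by linarith [pi_pos]) (by linarith) (by linarith)
  rw [sin_pi_div_six] at this
  linarith

lemma abs_mem_Icc_of_mem_dyadicBlock {m : ℕ} {ξ : ℤ} (hξ : ξ ∈ dyadicBlock m) :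
    |(ξ:ℝ)| ∈ Set.Icc ((2:ℝ) ^ m) (2 * 2 ^ m) := by
  obtain ⟨-, h1, h2⟩ := Finset.mem_filter.mp hξ
  rw [← Int.cast_abs]
  constructor
  · exact_mod_cast h1
  · rw [← pow_succ']
    exact_mod_cast h2.le

lemma sqrt_sum_sq_norm_fourierCoef_dyadicBlock_le {f : ℝ → ℂ} (hf : Continuous f)
    (hper : Function.Periodic f (2 * π)) {s B : ℝ} (hB : ∀ x y : ℝ, ‖f (x - y) - f x‖ ≤ B * |y| ^ s)
    (m : ℕ) :
    √(∑ ξ ∈ dyadicBlock m, ‖fourierCoef f ξ‖ ^ 2) ≤ B * (π / 2 ^ (m + 1)) ^ s := by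
  set h : ℝ := π / 2 ^ (m + 1)
  have hh : 0 < h := by positivity
  have hgap : ∀ ξ ∈ dyadicBlock m, ‖fourierCoef f ξ‖
      ≤ ‖fourierCoef (fun x => f (x - h) - f x) ξ‖ := fun ξ hξ => by
    obtain ⟨h1, h2⟩ := abs_mem_Icc_of_mem_dyadicBlock hξ
    have hθ : |(-ξ * h : ℝ)| = |(ξ:ℝ)| * h := by rw [abs_mul, abs_neg, abs_of_pos hh]
    have hgap1 := one_le_norm_exp_I_mul_sub_one (θ := -ξ * h)
      (by rw [hθ]; calc π / 2 = 2 ^ m * h := by simp only [h]; field_simp; ring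
                         _ ≤ _ := by gcongr)
      (by rw [hθ]; calc _ ≤ 2 * 2 ^ m * h := by gcongr
                         _ = π := by simp only [h]; field_simp; ring)
    rw [fourierCoef_sub (by fun_prop) hf, fourierCoef_comp_sub hper, ← sub_one_mul, norm_mul]
    push_cast at hgap1
    rw [show -(Complex.I * ξ * h) = Complex.I * (-ξ * h) by ring]
    exact le_mul_of_one_le_left (norm_nonneg _) hgap1
  calc √(∑ ξ ∈ dyadicBlock m, ‖fourierCoef f ξ‖ ^ 2)
      ≤ √(∑ ξ ∈ dyadicBlock m, ‖fourierCoef (fun x => f (x - h) - f x) ξ‖ ^ 2) := by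
        gcongr with ξ hξ
        exact hgap ξ hξ
    _ ≤ B * h ^ s := sqrt_sum_sq_norm_fourierCoef_le_of_norm_le (by fun_prop) (fun x => by
        simpa [abs_of_pos hh] using hB x h) _

lemma integral_norm_rpow_le_of_norm_le {E : Type*} [NormedAddCommGroup E] {G : ℝ → E}
    (hG : Continuous G) {p M a b : ℝ} (hp : 2 ≤ p) (hab : a ≤ b) (hM : ∀ x, ‖G x‖ ≤ M) :
    ∫ x in a..b, ‖G x‖ ^ p ≤ M ^ (p - 2) * ∫ x in a..b, ‖G x‖ ^ 2 := by
  rw [← intervalIntegral.integral_const_mul]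
  refine intervalIntegral.integral_mono_on hab
    ((hG.norm.rpow_const fun _ => Or.inr (by linarith)).intervalIntegrable _ _)
    ((continuous_const.mul (hG.norm.pow 2)).intervalIntegrable _ _) fun x _ => ?_
  calc ‖G x‖ ^ p = ‖G x‖ ^ (p - 2) * ‖G x‖ ^ 2 := by
        rw [← Real.rpow_natCast, ← Real.rpow_add' (norm_nonneg _) (by push_cast; linarith)]
        norm_num
    _ ≤ M ^ (p - 2) * ‖G x‖ ^ 2 := by
        gcongr
        exact hM x

noncomputable def torusLpNorm (p : ℝ) (g : ℝ → ℂ) : ℝ :=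
  (∫ x in (0:ℝ)..2 * π, ‖g x‖ ^ p) ^ (1 / p)

lemma torusLpNorm_nonneg (p : ℝ) (g : ℝ → ℂ) : 0 ≤ torusLpNorm p g :=
  Real.rpow_nonneg (intervalIntegral.integral_nonneg two_pi_pos.le fun _ _ => by positivity) _

lemma torusLpNorm_trigPoly_le (S : Finset ℤ) (c : ℤ → ℂ) {p : ℝ} (hp : 2 ≤ p) :
    torusLpNorm p (trigPoly S c)
      ≤ (2 * π) ^ (1 / p) * (S.card : ℝ) ^ (1 / 2 - 1 / p) * √(∑ ξ ∈ S, ‖c ξ‖ ^ 2) := by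
  set L := √(∑ ξ ∈ S, ‖c ξ‖ ^ 2)
  set n : ℝ := (S.card : ℝ)
  have hp0 : 0 < p := by linarith
  have hsup : ∀ x, ‖trigPoly S c x‖ ≤ √n * L := fun x => by
    refine (norm_trigPoly_le S c x).trans ?_
    rw [← Real.sqrt_mul (Nat.cast_nonneg _)]
    exact Real.le_sqrt_of_sq_le sq_sum_le_card_mul_sum_sq
  have hLsq : L ^ 2 = ∑ ξ ∈ S, ‖c ξ‖ ^ 2 := Real.sq_sqrt (by positivity)
  have hpow : ∫ x in (0:ℝ)..2 * π, ‖trigPoly S c x‖ ^ p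
      ≤ ((2 * π) ^ (1 / p) * n ^ (1 / 2 - 1 / p) * L) ^ p := by
    calc _ ≤ (√n * L) ^ (p - 2) * ∫ x in (0:ℝ)..2 * π, ‖trigPoly S c x‖ ^ 2 :=
          integral_norm_rpow_le_of_norm_le (continuous_trigPoly S c) hp two_pi_pos.le hsup
      _ = 2 * π * n ^ ((1 / 2 - 1 / p) * p) * (L ^ (p - 2) * L ^ (2:ℝ)) := by
          rw [integral_sq_norm_trigPoly, ← hLsq, Real.mul_rpow (by positivity) (by positivity),
            Real.sqrt_eq_rpow, ← Real.rpow_mul (by positivity), Real.rpow_two]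
          field_simp
      _ = _ := by
          rw [← Real.rpow_add' (by positivity) (by linarith), Real.mul_rpow (by positivity)
            (by positivity), Real.mul_rpow (by positivity) (by positivity),
            ← Real.rpow_mul two_pi_pos.le, ← Real.rpow_mul (by positivity),
            one_div_mul_cancel hp0.ne', Real.rpow_one]
          ring_nf
  have hint : 0 ≤ ∫ x in (0:ℝ)..2 * π, ‖trigPoly S c x‖ ^ p :=
    intervalIntegral.integral_nonneg two_pi_pos.le fun _ _ => by positivity
  calc torusLpNorm p (trigPoly S c)
        ≤ (((2 * π) ^ (1 / p) * n ^ (1 / 2 - 1 / p) * L) ^ p) ^ (1 / p) :=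
        Real.rpow_le_rpow hint hpow (by positivity)
    _ = _ := by rw [one_div, Real.rpow_rpow_inv (by positivity) hp0.ne']

lemma sqrt_sum_sq_norm_mul_le {ι : Type*} {S : Finset ι} {a b : ι → ℂ} {L : ℝ} (hL : 0 ≤ L)
    (ha : ∀ i ∈ S, ‖a i‖ ≤ L) :
    √(∑ i ∈ S, ‖a i * b i‖ ^ 2) ≤ L * √(∑ i ∈ S, ‖b i‖ ^ 2) := by
  rw [← Real.sqrt_sq hL, ← Real.sqrt_mul (sq_nonneg _), Finset.mul_sum]
  gcongr with i hi
  rw [norm_mul, mul_pow]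
  gcongr
  exact ha i hi

lemma rpow_le_two_rpow_abs_mul_rpow {N x : ℝ} (hN : 0 < N) (h1 : N ≤ x) (h2 : x ≤ 2 * N) (t : ℝ) :
    x ^ t ≤ 2 ^ |t| * N ^ t := by
  have hratio : 1 ≤ x / N ∧ x / N ≤ 2 := by
    rw [le_div_iff₀ hN, div_le_iff₀ hN]
    constructor <;> linarith
  calc x ^ t = (x / N) ^ t * N ^ t := by
        rw [← Real.mul_rpow (by linarith [hratio.1]) hN.le, div_mul_cancel₀ _ hN.ne']
    _ ≤ (x / N) ^ |t| * N ^ t := by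
        gcongr
        exacts [hratio.1, le_abs_self t]
    _ ≤ 2 ^ |t| * N ^ t := by
        gcongr
        exacts [by linarith [hratio.1], hratio.2]

lemma card_dyadicBlock_le (m : ℕ) : ((dyadicBlock m).card : ℝ) ≤ 5 * 2 ^ m := by
  have hcard : (dyadicBlock m).card ≤ ((2:ℤ) ^ (m + 1) + 1 - -2 ^ (m + 1)).toNat :=
    (Finset.card_filter_le _ _).trans_eq (Int.card_Icc _ _)
  have hIcc : ((2:ℤ) ^ (m + 1) + 1 - -2 ^ (m + 1)).toNat ≤ 5 * 2 ^ m := by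
    rw [Int.toNat_le]
    push_cast
    linarith [one_le_pow₀ (M₀ := ℤ) (n := m) one_le_two, pow_succ (2:ℤ) m]
  exact_mod_cast hcard.trans hIcc

lemma torusLpNorm_dyadicBlock_le {p s ρ C B : ℝ} (hp : 2 ≤ p) {σ : ℤ → ℂ}
    (hσ : ∀ ξ : ℤ, ξ ≠ 0 → ‖σ ξ‖ ≤ C * |(ξ:ℝ)| ^ (-ρ)) (hC : 0 ≤ C) {f : ℝ → ℂ}
    (hf : Continuous f) (hper : Function.Periodic f (2 * π))
    (hB : ∀ x y : ℝ, ‖f (x - y) - f x‖ ≤ B * |y| ^ s) (m : ℕ) :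
    torusLpNorm p (trigPoly (dyadicBlock m) fun ξ => σ ξ * fourierCoef f ξ)
      ≤ (2 * π) ^ (1 / p) * 5 ^ (1 / 2 - 1 / p) * (C * 2 ^ |ρ|) * (π / 2) ^ s * B
        * ((2:ℝ) ^ m) ^ (1 / 2 - 1 / p - ρ - s) := by
  set N : ℝ := 2 ^ m
  have hN : 0 < N := by positivity
  have hB0 : 0 ≤ B := by simpa using (norm_nonneg _).trans (hB 0 1)
  have ha : 0 ≤ 1 / 2 - 1 / p := by
    have : 1 / p ≤ 1 / 2 := one_div_le_one_div_of_le two_pos hp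
    linarith
  have hcard : ((dyadicBlock m).card : ℝ) ^ (1 / 2 - 1 / p)
      ≤ 5 ^ (1 / 2 - 1 / p) * N ^ (1 / 2 - 1 / p) := by
    rw [← Real.mul_rpow (by norm_num) hN.le]
    gcongr
    exact card_dyadicBlock_le m
  have hsymbol : ∀ ξ ∈ dyadicBlock m, ‖σ ξ‖ ≤ C * 2 ^ |ρ| * N ^ (-ρ) := fun ξ hξ => by
    obtain ⟨h1, h2⟩ := abs_mem_Icc_of_mem_dyadicBlock hξ
    have hξ0 : ξ ≠ 0 := by
      rintro rfl
      simp only [Int.cast_zero, abs_zero] at h1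
      linarith
    calc ‖σ ξ‖ ≤ C * |(ξ:ℝ)| ^ (-ρ) := hσ ξ hξ0
      _ ≤ C * (2 ^ |-ρ| * N ^ (-ρ)) := by
          gcongr
          exact rpow_le_two_rpow_abs_mul_rpow hN h1 h2 _
      _ = C * 2 ^ |ρ| * N ^ (-ρ) := by rw [abs_neg, mul_assoc]
  have hstep_eq : π / 2 ^ (m + 1) = π / 2 / N := by rw [pow_succ, div_div, mul_comm]
  calc _ ≤ (2 * π) ^ (1 / p) * ((dyadicBlock m).card : ℝ) ^ (1 / 2 - 1 / p)
          * √(∑ ξ ∈ dyadicBlock m, ‖σ ξ * fourierCoef f ξ‖ ^ 2) := torusLpNorm_trigPoly_le _ _ hp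
    _ ≤ (2 * π) ^ (1 / p) * (5 ^ (1 / 2 - 1 / p) * N ^ (1 / 2 - 1 / p))
          * (C * 2 ^ |ρ| * N ^ (-ρ) * (B * ((π / 2) ^ s * N ^ (-s)))) := by
        gcongr
        calc _ ≤ C * 2 ^ |ρ| * N ^ (-ρ) * √(∑ ξ ∈ dyadicBlock m, ‖fourierCoef f ξ‖ ^ 2) :=
              sqrt_sum_sq_norm_mul_le (by positivity) hsymbol
          _ ≤ _ := by
              gcongr
              rw [Real.rpow_neg hN.le, ← div_eq_mul_inv, ← Real.div_rpow (by positivity) hN.le,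
                ← hstep_eq]
              exact sqrt_sum_sq_norm_fourierCoef_dyadicBlock_le hf hper hB m
    _ = _ := by
        rw [show 1 / 2 - 1 / p - ρ - s = 1 / 2 - 1 / p + -ρ + -s by ring, Real.rpow_add hN,
          Real.rpow_add hN]
        ring

lemma rpow_tsum_two_rpow_mul_rpow_le {q r δ D : ℝ} (hq : 0 < q) (hD : 0 ≤ D) (hrδ : r + δ < 0)
    {x : ℕ → ℝ} (hx0 : ∀ m, 0 ≤ x m) (hx : ∀ m, x m ≤ D * ((2:ℝ) ^ m) ^ δ) :
    (∑' m : ℕ, (2:ℝ) ^ ((m:ℝ) * r * q) * x m ^ q) ^ (1 / q)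
      ≤ D * ((1 - (2:ℝ) ^ ((r + δ) * q))⁻¹) ^ (1 / q) := by
  set t : ℝ := 2 ^ ((r + δ) * q)
  have ht1 : t < 1 := Real.rpow_lt_one_of_one_lt_of_neg one_lt_two (mul_neg_of_neg_of_pos hrδ hq)
  have ht0 : 0 ≤ t := by positivity
  have hterm : ∀ m : ℕ, (2:ℝ) ^ ((m:ℝ) * r * q) * x m ^ q ≤ D ^ q * t ^ m := fun m => by
    calc _ ≤ (2:ℝ) ^ ((m:ℝ) * r * q) * (D * ((2:ℝ) ^ m) ^ δ) ^ q := by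
          gcongr
          · exact hx0 m
          · exact hx m
      _ = D ^ q * t ^ m := by
          rw [Real.mul_rpow hD (by positivity), ← Real.rpow_natCast, ← Real.rpow_natCast t,
            ← Real.rpow_mul zero_le_two, ← Real.rpow_mul zero_le_two, ← Real.rpow_mul zero_le_two,
            mul_left_comm, ← Real.rpow_add two_pos]
          ring_nf
  have hgeom : Summable fun m : ℕ => D ^ q * t ^ m :=
    (summable_geometric_of_lt_one ht0 ht1).mul_left _
  have hnonneg : ∀ m : ℕ, 0 ≤ (2:ℝ) ^ ((m:ℝ) * r * q) * x m ^ q := fun m => by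
    have := hx0 m
    positivity
  have hsum : ∑' m : ℕ, (2:ℝ) ^ ((m:ℝ) * r * q) * x m ^ q ≤ D ^ q * (1 - t)⁻¹ := by
    calc _ ≤ ∑' m : ℕ, D ^ q * t ^ m :=
          (hgeom.of_nonneg_of_le hnonneg hterm).tsum_le_tsum hterm hgeom
      _ = D ^ q * (1 - t)⁻¹ := by rw [tsum_mul_left, tsum_geometric_of_lt_one ht0 ht1]
  have h1t : 0 ≤ (1 - t)⁻¹ := inv_nonneg.mpr (by linarith)
  calc _ ≤ (D ^ q * (1 - t)⁻¹) ^ (1 / q) :=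
        Real.rpow_le_rpow (tsum_nonneg hnonneg) hsum (by positivity)
    _ = _ := by
        rw [Real.mul_rpow (by positivity) h1t, ← Real.rpow_mul hD, mul_one_div_cancel hq.ne',
          Real.rpow_one]

theorem hardy_littlewood_multiplier_general (p q s r ρ C : ℝ)
    (hp0 : 2 ≤ p) (hq0 : 0 < q) (hs0 : 0 < s)
    (hρ : r + 1 - 2/p < ρ)
    (σ : ℤ → ℂ) (hσ : ∀ ξ : ℤ, ξ ≠ 0 → ‖(σ ξ)‖ ≤ C * |(ξ:ℝ)| ^ (-ρ)) :
    ∃ C' : ℝ, ∀ f : ℝ → ℂ, Continuous f → (∀ x, f (x + 2 * Real.pi) = f x) →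
      ∀ A B : ℝ, (∀ x, ‖(f x)‖ ≤ A) →
      (∀ x y : ℝ, ‖(f (x - y) - f x)‖ ≤ B * |y| ^ s) →
      Summable (fun ξ : ℤ => ‖(fourierCoef f ξ)‖ ^ p) →
      (∑' m : ℕ, (2:ℝ) ^ ((m:ℝ) * r * q) *
          ((∫ x in (0:ℝ)..(2 * Real.pi),
              ‖(∑ ξ ∈ dyadicBlock m,
                σ ξ * fourierCoef f ξ * Complex.exp (Complex.I * (x:ℂ) * (ξ:ℂ)))‖ ^ p) ^ (1/p)) ^ q
        ) ^ (1/q)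
      ≤ C' * (A + B) := by
  have hC : 0 ≤ C := by simpa using (norm_nonneg _).trans (hσ 1 one_ne_zero)
  set δ := 1 / 2 - 1 / p - ρ - s
  have hrδ : r + δ < 0 := by
    simp only [δ]
    have : 1 / p ≤ 1 / 2 := one_div_le_one_div_of_le two_pos hp0
    have : 2 / p = 2 * (1 / p) := by ring
    linarith
  set K := (2 * π) ^ (1 / p) * 5 ^ (1 / 2 - 1 / p) * (C * 2 ^ |ρ|) * (π / 2) ^ s
  refine ⟨K * ((1 - (2:ℝ) ^ ((r + δ) * q))⁻¹) ^ (1 / q), fun f hf hper A B hA hB _ => ?_⟩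
  have hA0 : 0 ≤ A := (norm_nonneg _).trans (hA 0)
  have hB0 : 0 ≤ B := by simpa using (norm_nonneg _).trans (hB 0 1)
  calc _ ≤ K * B * ((1 - (2:ℝ) ^ ((r + δ) * q))⁻¹) ^ (1 / q) :=
        rpow_tsum_two_rpow_mul_rpow_le hq0 (by positivity) hrδ
          (fun m => torusLpNorm_nonneg _ _) (torusLpNorm_dyadicBlock_le hp0 hσ hC hf hper hB)
    _ ≤ _ := by
        have hgeom : 0 ≤ (1 - (2:ℝ) ^ ((r + δ) * q))⁻¹ := inv_nonneg.mpr <| sub_nonneg.mpr <|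
          Real.rpow_le_one_of_one_le_of_nonpos one_le_two (mul_neg_of_neg_of_pos hrδ hq0).le
        rw [mul_right_comm]
        gcongr
        linarith

theorem hardy_littlewood_multiplier (p q s r ρ C : ℝ)
    (hp0 : 2 ≤ p) (hq0 : 0 < q) (hs0 : 0 < s) (hs1 : s < 1)
    (hρ : r + 1 - 2/p < ρ) (hρ1 : ρ ≤ 1)
    (σ : ℤ → ℂ) (hσ : ∀ ξ : ℤ, ξ ≠ 0 → ‖(σ ξ)‖ ≤ C * |(ξ:ℝ)| ^ (-ρ))
    (hσ0 : ‖(σ 0)‖ ≤ C) :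
    ∃ C' : ℝ, ∀ f : ℝ → ℂ, Continuous f → (∀ x, f (x + 2 * Real.pi) = f x) →
      ∀ A B : ℝ, (∀ x, ‖(f x)‖ ≤ A) →
      (∀ x y : ℝ, ‖(f (x - y) - f x)‖ ≤ B * |y| ^ s) →
      Summable (fun ξ : ℤ => ‖(fourierCoef f ξ)‖ ^ p) →
      (∑' m : ℕ, (2:ℝ) ^ ((m:ℝ) * r * q) *
          ((∫ x in (0:ℝ)..(2 * Real.pi),
              ‖(∑ ξ ∈ dyadicBlock m,
                σ ξ * fourierCoef f ξ * Complex.exp (Complex.I * (x:ℂ) * (ξ:ℂ)))‖ ^ p) ^ (1/p)) ^ q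
        ) ^ (1/q)
      ≤ C' * (A + B) :=
  hardy_littlewood_multiplier_general p q s r ρ C hp0 hq0 hs0 hρ σ hσ
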